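/- arXiv:2502.15605 — 2 statements merged into one kernel-verified Lean document; each statement's English description precedes it below -/
import Mathlib

section
/- Let J ≥ 1 and let γ be a rectifiable curve in ℝ² from x to y. Then the J-carrot car(γ, J) is an open connected subset of ℝ² containing y in its closure, and every point z ∈ car(γ, J) can be joined to y by a rectifiable curve γ_z ⊂ car(γ, J) such that car(γ_z, J) ⊆ car(γ, J). -/
open Metric Set Filter

noncomputable section

local notation "E2" => EuclideanSpace ℝ (Fin 2)

/-- The `J`-carrot with vertex `γ 0` and core the curve `γ : [0,L] → ℝ²`:
`car(γ, J) = ⋃ { B(w, ℓ(γ[x,w])/J) : w ∈ γ \ {x} }`. -/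
def carrot (γ : ℝ → E2) (L J : ℝ) : Set E2 :=
  ⋃ t ∈ Set.Ioc (0 : ℝ) L, Metric.ball (γ t) ((eVariationOn γ (Set.Icc 0 t)).toReal / J)

lemma myContinuousOn_union {α β : Type*} [TopologicalSpace α] [TopologicalSpace β]
    {f : α → β} {s t : Set α} (hs : IsClosed s) (ht : IsClosed t)
    (hfs : ContinuousOn f s) (hft : ContinuousOn f t) : ContinuousOn f (s ∪ t) := by
  intro x hx
  rw [continuousWithinAt_union]
  constructor
  · by_cases h : x ∈ s
    · exact hfs x h
    · exact continuousWithinAt_of_notMem_closure (by rwa [hs.closure_eq])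
  · by_cases h : x ∈ t
    · exact hft x h
    · exact continuousWithinAt_of_notMem_closure (by rwa [ht.closure_eq])

lemma segLip (z w : E2) : LipschitzWith ‖w - z‖₊ (fun u : ℝ => z + u • (w - z)) := by
  rw [lipschitzWith_iff_dist_le_mul]
  intro a b
  rw [dist_add_left, dist_eq_norm, ← sub_smul, norm_smul, Real.dist_eq]
  rw [mul_comm]
  simp [Real.norm_eq_abs]

lemma segVar (z w : E2) {c : ℝ} (hc : 0 ≤ c) :
    eVariationOn (fun u : ℝ => z + u • (w - z)) (Icc 0 c) ≤ ENNReal.ofReal (c * dist z w) := by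
  have h1 : eVariationOn ((fun u : ℝ => z + u • (w - z)) ∘ id) (Icc 0 c)
      ≤ ‖w - z‖₊ * eVariationOn id (Icc (0:ℝ) c) :=
    LipschitzOnWith.comp_eVariationOn_le
      (LipschitzWith.lipschitzOnWith (segLip z w) (s := univ)) (mapsTo_univ _ _)
  have h2 : eVariationOn (id : ℝ → ℝ) (Icc 0 c) ≤ ENNReal.ofReal c := by
    have := MonotoneOn.eVariationOn_le (f := (id : ℝ → ℝ)) (s := Icc 0 c)
      (monotoneOn_id) (a := 0) (b := c) (by simp [hc]) (by simp [hc])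
    simpa using this
  calc eVariationOn (fun u : ℝ => z + u • (w - z)) (Icc 0 c)
      = eVariationOn ((fun u : ℝ => z + u • (w - z)) ∘ id) (Icc 0 c) := rfl
    _ ≤ ‖w - z‖₊ * eVariationOn id (Icc (0:ℝ) c) := h1
    _ ≤ ‖w - z‖₊ * ENNReal.ofReal c := by gcongr
    _ = ENNReal.ofReal (c * dist z w) := by
        rw [← enorm_eq_nnnorm, ← ofReal_norm, ← ENNReal.ofReal_mul (norm_nonneg _)]
        rw [dist_eq_norm, norm_sub_rev z w, mul_comm]

/-- For `J ≥ 1` and a rectifiable curve `γ` from `x` to `y`, the `J`-carrot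
`car(γ, J)` is an open connected set containing `y` in its closure, and every point
`z ∈ car(γ, J)` can be joined to `y` by a rectifiable curve contained in `car(γ, J)`
whose own `J`-carrot is contained in `car(γ, J)`. -/
theorem stmt2 (J L : ℝ) (hJ : 1 ≤ J) (hL : 0 < L)
    (γ : ℝ → E2) (x y : E2) (hx : γ 0 = x) (hy : γ L = y) (hxy : x ≠ y)
    (hcont : ContinuousOn γ (Set.Icc 0 L))
    (hrect : eVariationOn γ (Set.Icc 0 L) ≠ ⊤) :
    IsOpen (carrot γ L J) ∧ IsConnected (carrot γ L J) ∧ y ∈ closure (carrot γ L J) ∧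
      ∀ z ∈ carrot γ L J, ∃ L' : ℝ, 0 ≤ L' ∧ ∃ δ : ℝ → E2,
        δ 0 = z ∧ δ L' = y ∧ ContinuousOn δ (Set.Icc 0 L') ∧
        eVariationOn δ (Set.Icc 0 L') ≠ ⊤ ∧
        (∀ t ∈ Set.Icc 0 L', δ t ∈ carrot γ L J) ∧
        carrot δ L' J ⊆ carrot γ L J := by
  have hJ0 : (0:ℝ) < J := lt_of_lt_of_le one_pos hJ
  have hmem : ∀ (f : ℝ → E2) (M : ℝ) (w : E2), w ∈ carrot f M J ↔
      ∃ t, (0 < t ∧ t ≤ M) ∧ dist w (f t) < (eVariationOn f (Icc 0 t)).toReal / J := by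
    intro f M w
    simp [carrot, Set.mem_Ioc, and_assoc]
  have hfin : ∀ t : ℝ, t ≤ L → eVariationOn γ (Icc 0 t) ≠ ⊤ := fun t ht =>
    ne_top_of_le_ne_top hrect (eVariationOn.mono γ (Icc_subset_Icc le_rfl ht))
  -- positivity of total variation
  have hLvar : 0 < (eVariationOn γ (Icc 0 L)).toReal := by
    apply ENNReal.toReal_pos _ hrect
    intro h0
    have := eVariationOn.edist_le γ (s := Icc 0 L) (x := 0) (y := L)
      ⟨le_rfl, hL.le⟩ ⟨hL.le, le_rfl⟩
    rw [h0, le_zero_iff, edist_eq_zero] at this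
    exact hxy (hx ▸ hy ▸ this)
  have hyc : y ∈ carrot γ L J := by
    rw [hmem]
    exact ⟨L, ⟨hL, le_rfl⟩, by rw [hy, dist_self]; positivity⟩
  -- positivity transfer
  have hpos : ∀ {a : ℝ}, 0 < a / J → 0 < a := by
    intro a ha
    rcases div_pos_iff.mp ha with ⟨h, _⟩ | ⟨_, h⟩
    · exact h
    · linarith
  -- monotonicity of toReal of variation
  have hmono : ∀ a b : ℝ, a ≤ b → b ≤ L →
      (eVariationOn γ (Icc 0 a)).toReal ≤ (eVariationOn γ (Icc 0 b)).toReal := fun a b hab hbL =>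
    ENNReal.toReal_mono (hfin b hbL) (eVariationOn.mono γ (Icc_subset_Icc le_rfl hab))
  refine ⟨?_, ?_, ?_, ?_⟩
  · -- open
    unfold carrot
    exact isOpen_biUnion fun t _ => isOpen_ball
  · -- connected
    refine ⟨⟨y, hyc⟩, isPreconnected_of_forall y ?_⟩
    intro w hw
    obtain ⟨t, ⟨ht0, htL⟩, hd⟩ := (hmem γ L w).1 hw
    have hrad : 0 < (eVariationOn γ (Icc 0 t)).toReal / J := lt_of_le_of_lt dist_nonneg hd
    have hradpos : 0 < (eVariationOn γ (Icc 0 t)).toReal := hpos hrad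
    refine ⟨Metric.ball (γ t) ((eVariationOn γ (Icc 0 t)).toReal / J) ∪ γ '' Icc t L,
      ?_, ?_, ?_, ?_⟩
    · apply union_subset
      · intro v hv
        exact (hmem γ L v).2 ⟨t, ⟨ht0, htL⟩, mem_ball.1 hv⟩
      · rintro v ⟨u, hu, rfl⟩
        refine (hmem γ L (γ u)).2 ⟨u, ⟨lt_of_lt_of_le ht0 hu.1, hu.2⟩, ?_⟩
        rw [dist_self]
        exact div_pos (lt_of_lt_of_le hradpos (hmono t u hu.1 hu.2)) hJ0
    · exact Or.inr ⟨L, ⟨htL, le_rfl⟩, hy⟩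
    · exact Or.inl (mem_ball.2 hd)
    · refine IsPreconnected.union (γ t) (mem_ball.2 (by rwa [dist_self])) ?_
        (convex_ball _ _).isPreconnected
        ((isPreconnected_Icc).image γ (hcont.mono (Icc_subset_Icc ht0.le le_rfl)))
      exact mem_image_of_mem γ ⟨le_rfl, htL⟩
  · exact subset_closure hyc
  · -- part 4
    intro z hz
    obtain ⟨t₀, ⟨ht₀0, ht₀L⟩, hzd⟩ := (hmem γ L z).1 hz
    set d := dist z (γ t₀) with hddef
    set r := (eVariationOn γ (Icc 0 t₀)).toReal with hrdef
    have hd0 : 0 ≤ d := dist_nonneg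
    have hr0 : 0 < r := hpos (lt_of_le_of_lt hd0 hzd)
    set L' := L - t₀ + 1 with hL'def
    have hL'1 : 1 ≤ L' := by simp [hL'def]; linarith
    set δ : ℝ → E2 := fun s => if s ≤ 1 then z + s • (γ t₀ - z) else γ (s + t₀ - 1) with hδdef
    -- variation bound on the segment part
    have varA : ∀ s : ℝ, 0 ≤ s → s ≤ 1 →
        eVariationOn δ (Icc 0 s) ≤ ENNReal.ofReal (s * d) := by
      intro s hs0 hs1
      have heq : EqOn δ (fun u : ℝ => z + u • (γ t₀ - z)) (Icc 0 s) := by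
        intro u hu
        simp only [hδdef]
        rw [if_pos (le_trans hu.2 hs1)]
      rw [eVariationOn.eq_of_eqOn heq]
      exact segVar z (γ t₀) hs0
    -- variation on the curve part
    have varIccB : ∀ s : ℝ, 1 ≤ s →
        eVariationOn δ (Icc 1 s) = eVariationOn γ (Icc t₀ (s + t₀ - 1)) := by
      intro s h1
      have heq : EqOn δ (γ ∘ fun u : ℝ => u + (t₀ - 1)) (Icc 1 s) := by
        intro u hu
        simp only [hδdef, Function.comp]
        split_ifs with h
        · have hu1 : u = 1 := le_antisymm h hu.1
          subst hu1
          rw [one_smul, add_sub_cancel]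
          congr 1
          ring
        · congr 1
          ring
      rw [eVariationOn.eq_of_eqOn heq,
        eVariationOn.comp_eq_of_monotoneOn _ _ (fun a _ b _ hab => by simpa using hab)]
      rw [image_add_const_Icc]
      congr 1 <;> ring
    have varB : ∀ s : ℝ, 1 ≤ s →
        eVariationOn δ (Icc 0 s) ≤ ENNReal.ofReal d + eVariationOn γ (Icc t₀ (s + t₀ - 1)) := by
      intro s h1
      have hsplit := eVariationOn.Icc_add_Icc δ (s := univ) (a := 0) (b := 1) (c := s)
        zero_le_one h1 (mem_univ 1)
      simp only [univ_inter] at hsplit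
      rw [← hsplit, varIccB s h1]
      gcongr
      have := varA 1 zero_le_one le_rfl
      simpa using this
    have hufin : ∀ u : ℝ, u ≤ L → eVariationOn γ (Icc t₀ u) ≠ ⊤ := fun u hu =>
      ne_top_of_le_ne_top hrect (eVariationOn.mono γ (Icc_subset_Icc ht₀0.le hu))
    have hsum : ∀ u : ℝ, t₀ ≤ u →
        eVariationOn γ (Icc 0 t₀) + eVariationOn γ (Icc t₀ u) = eVariationOn γ (Icc 0 u) := by
      intro u hu
      have := eVariationOn.Icc_add_Icc γ (s := univ) (a := 0) (b := t₀) (c := u)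
        ht₀0.le hu (mem_univ t₀)
      simpa using this
    refine ⟨L', by linarith, δ, ?_, ?_, ?_, ?_, ?_, ?_⟩
    · simp [hδdef]
    · -- δ L' = y
      simp only [hδdef]
      split_ifs with h
      · have hL1 : L' = 1 := le_antisymm h hL'1
        have ht₀L' : t₀ = L := by rw [hL'def] at hL1; linarith
        rw [hL1, one_smul, add_sub_cancel, ht₀L', hy]
      · have : L' + t₀ - 1 = L := by simp [hL'def]; ring
        rw [this, hy]
    · -- continuity
      have hIcc : Icc (0:ℝ) L' = Icc 0 1 ∪ Icc 1 L' :=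
        (Icc_union_Icc_eq_Icc zero_le_one hL'1).symm
      rw [hIcc]
      apply myContinuousOn_union isClosed_Icc isClosed_Icc
      · apply ContinuousOn.congr (f := fun s : ℝ => z + s • (γ t₀ - z))
        · exact (continuous_const.add (continuous_id.smul continuous_const)).continuousOn
        · intro s hs
          simp only [hδdef]
          rw [if_pos hs.2]
      · apply ContinuousOn.congr (f := γ ∘ fun s : ℝ => s + t₀ - 1)
        · apply hcont.comp ((continuous_id.add continuous_const).sub continuous_const).continuousOn
          intro s hs
          have h1 := hs.1
          have h2 : s ≤ L - t₀ + 1 := by rw [← hL'def]; exact hs.2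
          simp only [mem_Icc, id_eq, Pi.add_apply, Pi.sub_apply]
          constructor <;> linarith
        · intro s hs
          simp only [hδdef, Function.comp]
          split_ifs with h
          · have hs1 : s = 1 := le_antisymm h hs.1
            subst hs1
            rw [one_smul, add_sub_cancel]
            congr 1
            ring
          · rfl
    · -- finite variation
      have := varB L' hL'1
      have hLeq : L' + t₀ - 1 = L := by simp [hL'def]; ring
      rw [hLeq] at this
      exact ne_top_of_le_ne_top
        (ENNReal.add_ne_top.2 ⟨ENNReal.ofReal_ne_top, hufin L le_rfl⟩) this
    · -- δ maps into carrot
      intro t ht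
      by_cases h : t ≤ 1
      · have hδt : δ t = z + t • (γ t₀ - z) := if_pos h
        refine (hmem γ L (δ t)).2 ⟨t₀, ⟨ht₀0, ht₀L⟩, ?_⟩
        have hdist : dist (δ t) (γ t₀) = (1 - t) * d := by
          rw [hδt, hddef, dist_eq_norm, dist_eq_norm]
          have hvec : z + t • (γ t₀ - z) - γ t₀ = (1 - t) • (z - γ t₀) := by
            module
          rw [hvec, norm_smul, Real.norm_eq_abs, abs_of_nonneg (by linarith)]
        rw [hdist]
        have ht0 := ht.1
        nlinarith [hzd]
      · push_neg at h
        have hδt : δ t = γ (t + t₀ - 1) := if_neg (not_le.2 h)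
        have hu0 : 0 < t + t₀ - 1 := by linarith
        have huL : t + t₀ - 1 ≤ L := by
          have := ht.2; simp [hL'def] at this; linarith
        refine (hmem γ L (δ t)).2 ⟨t + t₀ - 1, ⟨hu0, huL⟩, ?_⟩
        rw [hδt, dist_self]
        have : r ≤ (eVariationOn γ (Icc 0 (t + t₀ - 1))).toReal :=
          hmono t₀ (t + t₀ - 1) (by linarith) huL
        exact div_pos (lt_of_lt_of_le hr0 this) hJ0
    · -- carrot of δ is inside carrot of γ
      intro w hw
      obtain ⟨t, ⟨ht0, htL'⟩, hwd⟩ := (hmem δ L' w).1 hw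
      by_cases h : t ≤ 1
      · have hvar : (eVariationOn δ (Icc 0 t)).toReal ≤ t * d :=
          ENNReal.toReal_le_of_le_ofReal (mul_nonneg ht0.le hd0) (varA t ht0.le h)
        have hδt : δ t = z + t • (γ t₀ - z) := if_pos h
        have hdist : dist (δ t) (γ t₀) = (1 - t) * d := by
          rw [hδt, hddef, dist_eq_norm, dist_eq_norm]
          have hvec : z + t • (γ t₀ - z) - γ t₀ = (1 - t) • (z - γ t₀) := by
            module
          rw [hvec, norm_smul, Real.norm_eq_abs, abs_of_nonneg (by linarith)]
        have htri : dist w (γ t₀) ≤ dist w (δ t) + dist (δ t) (γ t₀) := dist_triangle _ _ _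
        have h2 : (eVariationOn δ (Icc 0 t)).toReal / J ≤ t * d / J := by gcongr
        have h4 : t * d / J ≤ t * d := div_le_self (mul_nonneg ht0.le hd0) hJ
        have h5 : t * d + (1 - t) * d = d := by ring
        refine (hmem γ L w).2 ⟨t₀, ⟨ht₀0, ht₀L⟩, ?_⟩
        rw [← hrdef]
        linarith [hwd, hdist, hzd]
      · push_neg at h
        have hδt : δ t = γ (t + t₀ - 1) := if_neg (not_le.2 h)
        have hu0 : 0 < t + t₀ - 1 := by linarith
        have huL : t + t₀ - 1 ≤ L := by simp [hL'def] at htL'; linarith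
        have hAfin : eVariationOn γ (Icc t₀ (t + t₀ - 1)) ≠ ⊤ := hufin _ huL
        set A := (eVariationOn γ (Icc t₀ (t + t₀ - 1))).toReal with hAdef
        have hA0 : 0 ≤ A := ENNReal.toReal_nonneg
        have hvar : (eVariationOn δ (Icc 0 t)).toReal ≤ d + A := by
          have h1 := ENNReal.toReal_mono
            (ENNReal.add_ne_top.2 ⟨ENNReal.ofReal_ne_top, hAfin⟩) (varB t h.le)
          rwa [ENNReal.toReal_add ENNReal.ofReal_ne_top hAfin,
            ENNReal.toReal_ofReal hd0] at h1
        have hℓu : (eVariationOn γ (Icc 0 (t + t₀ - 1))).toReal = r + A := by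
          rw [← hsum (t + t₀ - 1) (by linarith), ENNReal.toReal_add (hfin t₀ ht₀L) hAfin]
        have hrJ : r / J ≤ r := div_le_self hr0.le hJ
        refine (hmem γ L w).2 ⟨t + t₀ - 1, ⟨hu0, huL⟩, ?_⟩
        rw [← hδt, hℓu]
        have hdA : d + A < r + A := by linarith
        have h2 : (eVariationOn δ (Icc 0 t)).toReal / J ≤ (d + A) / J := by gcongr
        have h3 : (d + A) / J < (r + A) / J := (div_lt_div_iff_of_pos_right hJ0).2 hdA
        linarith [hwd]
end
end

section
/- Let J ≥ 1, r > 0, and let F be a finite family of balls in ℝ², each of radius at least r/J and at most (3/2)r, whose union U = ⋃ F is connected. Then any two centers of balls in F can be joined by a polyline (finite union of line segments) contained in U whose vertices are centers of balls in F, consisting of at most #F segments, and each segment joining centers of two intersecting balls D, D' (radii s, s') has length at most s + s' ≤ 3r and is contained in D ∪ D'. -/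
open Metric Set

noncomputable section

local notation "E2" => EuclideanSpace ℝ (Fin 2)

section Aux

variable {X : Type*} [NormedAddCommGroup X] [NormedSpace ℝ X]

lemma seg_subset_union {a b : X} {s s' : ℝ} (hd : dist a b < s + s') :
    segment ℝ a b ⊆ Metric.ball a s ∪ Metric.ball b s' := by
  intro y hy
  rw [segment_eq_image] at hy
  obtain ⟨t, ht, rfl⟩ := hy
  obtain ⟨ht0, ht1⟩ := ht
  set y : X := (1 - t) • a + t • b with hy
  have hya : y - a = t • (b - a) := by rw [hy]; module
  have hyb : y - b = (1 - t) • (a - b) := by rw [hy]; module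
  have hda : dist y a = t * dist a b := by
    rw [dist_eq_norm, hya, norm_smul, Real.norm_eq_abs, abs_of_nonneg ht0,
      ← dist_eq_norm, dist_comm]
  have hdb : dist y b = (1 - t) * dist a b := by
    rw [dist_eq_norm, hyb, norm_smul, Real.norm_eq_abs, abs_of_nonneg (by linarith),
      ← dist_eq_norm]
  by_cases h : t * dist a b < s
  · left; rw [mem_ball, hda]; exact h
  · right; rw [mem_ball, hdb]
    push_neg at h
    nlinarith [dist_nonneg (x := a) (y := b)]

end Aux

/-- If a finite family of balls with radii in `[r/J, (3/2)r]` has connected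
union `U`, any two centers can be joined by a polyline in `U` with at most `#F` segments,
whose vertices are centers, each segment joining centers of two intersecting balls `D, D'`
(radii `s, s'`), of length at most `s + s' ≤ 3r`, and contained in `D ∪ D'`. -/
theorem stmt11 {ι : Type} (F : Finset ι) (J r : ℝ) (hJ : 1 ≤ J) (hr : 0 < r)
    (c : ι → E2) (ρ : ι → ℝ)
    (hρ : ∀ i ∈ F, r / J ≤ ρ i ∧ ρ i ≤ (3 / 2) * r)
    (hconn : IsConnected (⋃ i ∈ F, Metric.ball (c i) (ρ i))) :
    ∀ i ∈ F, ∀ j ∈ F, ∃ m : ℕ, m ≤ F.card ∧ ∃ p : ℕ → ι,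
      p 0 = i ∧ p m = j ∧ (∀ k ≤ m, p k ∈ F) ∧
      ∀ k < m,
        (Metric.ball (c (p k)) (ρ (p k)) ∩
          Metric.ball (c (p (k + 1))) (ρ (p (k + 1)))).Nonempty ∧
        dist (c (p k)) (c (p (k + 1))) ≤ ρ (p k) + ρ (p (k + 1)) ∧
        ρ (p k) + ρ (p (k + 1)) ≤ 3 * r ∧
        segment ℝ (c (p k)) (c (p (k + 1))) ⊆
          Metric.ball (c (p k)) (ρ (p k)) ∪
            Metric.ball (c (p (k + 1))) (ρ (p (k + 1))) := by
  classical
  intro i hi j hj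
  have hρpos : ∀ i ∈ F, 0 < ρ i := fun i hi =>
    lt_of_lt_of_le (div_pos hr (lt_of_lt_of_le one_pos hJ)) (hρ i hi).1
  -- the intersection graph on vertices of F
  set G : SimpleGraph {x // x ∈ F} :=
    { Adj := fun a b => a ≠ b ∧
        (Metric.ball (c a.1) (ρ a.1) ∩ Metric.ball (c b.1) (ρ b.1)).Nonempty
      symm := by
        constructor
        rintro a b ⟨hne, x, hx1, hx2⟩
        exact ⟨hne.symm, x, hx2, hx1⟩
      loopless := by constructor; rintro a ⟨hne, -⟩; exact hne rfl } with hG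
  -- reachability
  have hreach : G.Reachable ⟨i, hi⟩ ⟨j, hj⟩ := by
    set S : Set {x // x ∈ F} := {v | G.Reachable ⟨i, hi⟩ v} with hS
    set A : Set E2 := ⋃ v ∈ S, Metric.ball (c v.1) (ρ v.1) with hA
    set B : Set E2 := ⋃ v ∈ Sᶜ, Metric.ball (c v.1) (ρ v.1) with hB
    have hopenA : IsOpen A := isOpen_biUnion fun _ _ => isOpen_ball
    have hopenB : IsOpen B := isOpen_biUnion fun _ _ => isOpen_ball
    set U : Set E2 := ⋃ i ∈ F, Metric.ball (c i) (ρ i) with hU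
    have hsub : U ⊆ A ∪ B := by
      intro x hx
      simp only [hU, mem_iUnion] at hx
      obtain ⟨k, hk, hxk⟩ := hx
      by_cases hkS : (⟨k, hk⟩ : {x // x ∈ F}) ∈ S
      · left; exact mem_biUnion hkS hxk
      · right; exact mem_biUnion hkS hxk
    have hdisj : A ∩ B = ∅ := by
      rw [eq_empty_iff_forall_notMem]
      rintro x ⟨hxA, hxB⟩
      simp only [hA, hB, mem_iUnion] at hxA hxB
      obtain ⟨v, hvS, hxv⟩ := hxA
      obtain ⟨w, hwS, hxw⟩ := hxB
      apply hwS
      by_cases hvw : v = w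
      · exact hvw ▸ hvS
      · exact hvS.trans (SimpleGraph.Adj.reachable ⟨hvw, x, hxv, hxw⟩)
    have hAU : (U ∩ A).Nonempty := by
      refine ⟨c i, ?_, ?_⟩
      · exact mem_biUnion hi (mem_ball_self (hρpos i hi))
      · exact mem_biUnion (show (⟨i, hi⟩ : {x // x ∈ F}) ∈ S from SimpleGraph.Reachable.refl _)
          (mem_ball_self (hρpos i hi))
    by_contra hjr
    have hBU : (U ∩ B).Nonempty := by
      refine ⟨c j, mem_biUnion hj (mem_ball_self (hρpos j hj)), ?_⟩
      exact mem_biUnion (show (⟨j, hj⟩ : {x // x ∈ F}) ∈ Sᶜ from hjr)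
        (mem_ball_self (hρpos j hj))
    obtain ⟨x, -, hx⟩ := hconn.isPreconnected A B hopenA hopenB hsub hAU hBU
    rw [hdisj] at hx
    exact hx
  -- extract a path
  obtain ⟨w⟩ := hreach
  obtain ⟨w, hw⟩ := w.toPath
  have hm : w.length < Fintype.card {x // x ∈ F} := hw.length_lt
  refine ⟨w.length, by simpa [Fintype.card_coe] using hm.le, fun k => (w.getVert k).1,
    by simp, by simp [SimpleGraph.Walk.getVert_length], fun k _ => (w.getVert k).2, ?_⟩
  intro k hk
  have hadj := w.adj_getVert_succ hk
  obtain ⟨-, hne⟩ := hadj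
  obtain ⟨x, hx1, hx2⟩ := hne
  set a := (w.getVert k) with ha
  set b := (w.getVert (k + 1)) with hb
  have hdlt : dist (c a.1) (c b.1) < ρ a.1 + ρ b.1 := by
    calc dist (c a.1) (c b.1) ≤ dist (c a.1) x + dist x (c b.1) := dist_triangle _ _ _
    _ < ρ a.1 + ρ b.1 := by
        rw [mem_ball] at hx1 hx2
        rw [dist_comm (c a.1) x]
        linarith
  refine ⟨⟨x, hx1, hx2⟩, hdlt.le, ?_, seg_subset_union hdlt⟩
  have h1 := (hρ _ a.2).2
  have h2 := (hρ _ b.2).2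
  linarith
end
end
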